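/- arXiv:1704.05226 — 3 statements merged into one kernel-verified Lean document; each statement's English description precedes it below -/
import Mathlib

section
/- For every object $[q]$ of $\Delta$, the comma category $f/[q]$ (the left fiber of the functor $f \colon P \to \Delta$ at $[q]$) is nonempty and connected; more precisely, any two objects of $f/[q]$ can be joined by a zigzag of morphisms. -/
open CategoryTheory

/-- The poset `P` of nonempty finite subsets of `ℕ`, ordered by inclusion. -/
abbrev NonemptyFinset := {T : Finset ℕ // T.Nonempty}

theorem card_eq (T : NonemptyFinset) : T.1.card = T.1.card - 1 + 1 :=
  (Nat.succ_pred_eq_of_pos (Finset.card_pos.mpr T.2)).symm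

/-!
Reading `F.obj T ⟶ [q]` through the increasing enumeration of `T`, an object of the left fiber
is a nonempty finite `T ⊆ ℕ` labelled monotonically by `[q]`, and an inclusion `T ⊆ T'` is a
morphism as soon as it preserves labels. So the restrictions of one monotone `f : ℕ → [q]` to
`T` and `T'` are joined through `T ∪ T'`. An object whose label at `t` is `i` receives a morphism
from `{t}` labelled by the step function `f` that is `i` up to `t` and `q` afterwards; the
restriction of `f` to `{t + 1}` is the constant label `q`, and the constant `q` on `{t + 1}` is
joined to the constant `q` on `{0}`.
-/

namespace LeftFiber

variable {F : NonemptyFinset ⥤ SimplexCategory}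
  (hobj : ∀ T, F.obj T = SimplexCategory.mk (T.1.card - 1)) {q : ℕ}

def label (X : CostructuredArrow F (SimplexCategory.mk q)) (t : X.left.1) : Fin (q + 1) :=
  (eqToHom (hobj X.left).symm ≫ X.hom).toOrderHom ((X.left.1.orderIsoOfFin (card_eq _)).symm t)

def RespectsPositions : Prop :=
  ∀ (T T' : NonemptyFinset) (h : T ⟶ T') (j : Fin (T.1.card - 1 + 1)),
    T'.1.orderEmbOfFin (card_eq T')
        ((eqToHom (hobj T).symm ≫ F.map h ≫ eqToHom (hobj T')).toOrderHom j) =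
      T.1.orderEmbOfFin (card_eq T) j

def homOfLabel (hmap : RespectsPositions hobj)
    {X Y : CostructuredArrow F (SimplexCategory.mk q)} (hle : X.left ≤ Y.left)
    (hlabel : ∀ t ht, label hobj Y ⟨t, hle ht⟩ = label hobj X ⟨t, ht⟩) : X ⟶ Y :=
  CostructuredArrow.homMk (homOfLE hle) (by
    rw [← cancel_epi (eqToHom (hobj X.left).symm)]
    have hcomp : eqToHom (hobj X.left).symm ≫ F.map (homOfLE hle) ≫ Y.hom =
        (eqToHom (hobj X.left).symm ≫ F.map (homOfLE hle) ≫ eqToHom (hobj Y.left)) ≫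
          (eqToHom (hobj Y.left).symm ≫ Y.hom) := by simp
    rw [hcomp]
    ext j : 3
    rw [SimplexCategory.comp_toOrderHom, OrderHom.comp_coe, Function.comp_apply]
    have hj := hlabel _ (Finset.orderEmbOfFin_mem _ (card_eq _) j)
    dsimp only [label] at hj
    convert hj using 3
    · rw [eq_comm, OrderIso.symm_apply_eq, Subtype.ext_iff, Finset.coe_orderIsoOfFin_apply,
        hmap]
    · exact ((X.left.1.orderIsoOfFin _).symm_apply_apply j).symm)

def restrict (T : NonemptyFinset) (f : ℕ →o Fin (q + 1)) :
    CostructuredArrow F (SimplexCategory.mk q) :=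
  CostructuredArrow.mk (Y := T) <| eqToHom (hobj T) ≫
    SimplexCategory.mkHom (f.comp (T.1.orderEmbOfFin (card_eq T)).toOrderHom)

lemma label_restrict (T : NonemptyFinset) (f : ℕ →o Fin (q + 1)) (t : ℕ)
    (ht : t ∈ (restrict hobj T f).left.1) : label hobj (restrict hobj T f) ⟨t, ht⟩ = f t := by
  dsimp only [label, restrict, CostructuredArrow.mk_left, CostructuredArrow.mk_hom_eq_self]
  rw [eqToHom_trans_assoc, eqToHom_refl, Category.id_comp]
  simp [SimplexCategory.mkHom, ← Finset.coe_orderIsoOfFin_apply]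

def restrictHom (hmap : RespectsPositions hobj) {T T' : NonemptyFinset} (hle : T ≤ T')
    {f f' : ℕ →o Fin (q + 1)} (hf : ∀ t ∈ T.1, f' t = f t) :
    restrict hobj T f ⟶ restrict hobj T' f' :=
  homOfLabel hobj hmap hle fun t ht =>
    (label_restrict hobj T' f' t _).trans ((hf t ht).trans (label_restrict hobj T f t ht).symm)

lemma zigzag_restrict (hmap : RespectsPositions hobj) (f : ℕ →o Fin (q + 1))
    (T T' : NonemptyFinset) : Zigzag (restrict hobj T f) (restrict hobj T' f) :=
  Zigzag.of_hom_inv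
    (restrictHom hobj hmap (T' := ⟨T.1 ∪ T'.1, T.2.inl⟩) Finset.subset_union_left fun _ _ => rfl)
    (restrictHom hobj hmap Finset.subset_union_right fun _ _ => rfl)

def single (t : ℕ) : NonemptyFinset := ⟨{t}, Finset.singleton_nonempty t⟩

def step (s : ℕ) (i : Fin (q + 1)) : ℕ →o Fin (q + 1) :=
  ⟨fun n => if n ≤ s then i else Fin.last q, fun a b hab => by
    dsimp only
    split_ifs <;> first | omega | exact le_rfl | exact Fin.le_last _⟩

lemma zigzag_restrict_const_last (hmap : RespectsPositions hobj)
    (X : CostructuredArrow F (SimplexCategory.mk q)) :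
    Zigzag X (restrict hobj (single 0) (OrderHom.const ℕ (Fin.last q))) := by
  obtain ⟨t, ht⟩ := X.left.2
  set i := label hobj X ⟨t, ht⟩
  have hX : restrict hobj (single t) (step t i) ⟶ X :=
    homOfLabel hobj hmap (Finset.singleton_subset_iff.2 ht) fun s hs => by
      obtain rfl := Finset.mem_singleton.1 hs
      rw [label_restrict]
      exact (if_pos le_rfl).symm
  have hlast : restrict hobj (single (t + 1)) (OrderHom.const ℕ (Fin.last q)) ⟶
      restrict hobj (single (t + 1)) (step t i) :=
    restrictHom hobj hmap le_rfl fun s hs => by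
      obtain rfl := Finset.mem_singleton.1 hs
      exact if_neg (Nat.not_succ_le_self t)
  exact (Zigzag.of_inv hX).trans <| (zigzag_restrict hobj hmap _ _ _).trans <|
    (Zigzag.of_inv hlast).trans (zigzag_restrict hobj hmap _ _ _)

end LeftFiber

open LeftFiber in
/-- For the functor `f : P ⥤ Δ` (characterized by sending
`T = {t₀ < ⋯ < t_q}` to `[q]` and an inclusion to the order-preserving injection
recording positions), the comma category (left fiber) `f/[q]` is nonempty and
connected: any two objects are joined by a zigzag of morphisms.  In Lean this is
exactly `IsConnected (CostructuredArrow F [q])`. -/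
theorem leftFiber_isConnected
    (F : NonemptyFinset ⥤ SimplexCategory)
    (hobj : ∀ T, F.obj T = SimplexCategory.mk (T.1.card - 1))
    (hmap : ∀ (T T' : NonemptyFinset) (h : T ⟶ T') (j : Fin (T.1.card - 1 + 1)),
      T'.1.orderEmbOfFin (card_eq T')
          ((SimplexCategory.Hom.toOrderHom
            (eqToHom (hobj T).symm ≫ F.map h ≫ eqToHom (hobj T'))) j)
        = T.1.orderEmbOfFin (card_eq T) j)
    (q : ℕ) :
    IsConnected (CostructuredArrow F (SimplexCategory.mk q)) := by
  have : Nonempty (CostructuredArrow F (SimplexCategory.mk q)) :=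
    ⟨restrict hobj (single 0) (OrderHom.const ℕ (Fin.last q))⟩
  exact zigzag_isConnected fun X Y =>
    (zigzag_restrict_const_last hobj hmap X).trans (zigzag_restrict_const_last hobj hmap Y).symm
end

section
/- Let $Y^\bullet$ be a cosimplicial abelian group and let $f \colon P \to \Delta$ be the functor sending a nonempty finite subset $T \subset \mathbb{N}$ of cardinality $q+1$ to $[q]$. Then for $s = 0$, the canonical map $f^* \colon \lim_{\Delta} Y^\bullet \to \lim_P (Y^\bullet \circ f)$ is an isomorphism of abelian groups. -/
/-!
An element `z ∈ Y⁰` with `d⁰z = d¹z` has the same image under all vertices `⦋0⦌ ⟶ ⦋n⦌`, because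
any two vertices of `⦋n⦌` are joined by an edge. This makes `f*` land in the sections, and `f*` is
injective because every vertex `⦋0⦌ ⟶ x` is split by `x ⟶ ⦋0⦌`. Conversely, a section `u` is
determined by its values at the singletons `{t}`: for `t ∈ T`, `u T` is the image of `u {t}` under
the vertex `F({t} ⊆ T)`. Comparing images in `u {s, t}` shows that all `u {t}` agree, and
the common value is equalized by `δ⁰, δ¹` because `hmap` sends the inclusions of `{0}` and `{1}`
into `{0, 1}` to the two different vertices of `⦋1⦌`.
-/

open CategoryTheory

open SimplexCategory Simplicial

namespace SimplexCategory

lemma hom_zero_one_eq_δ_zero_or_δ_one (f : ⦋0⦌ ⟶ ⦋1⦌) : f = δ 0 ∨ f = δ 1 := by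
  rw [δ_zero_eq_const, δ_one_eq_const, eq_const_of_zero f]
  generalize f.toOrderHom 0 = i
  fin_cases i <;> simp

variable {C : Type*} [Category C] {FC : C → C → Type*} {CC : C → Type*}
  [∀ X Y, FunLike (FC X Y) (CC X) (CC Y)] [ConcreteCategory C FC] (Y : SimplexCategory ⥤ C)

lemma leftInverse_map_const_zero {x : SimplexCategory} (f : ⦋0⦌ ⟶ x) :
    Function.LeftInverse (Y.map (const x ⦋0⦌ 0)) (Y.map f) := fun a => by
  rw [← ConcreteCategory.comp_apply, ← Y.map_comp, hom_zero_zero (f ≫ _), Y.map_id,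
    ConcreteCategory.id_apply]

lemma map_injective_of_zero {x : SimplexCategory} (f : ⦋0⦌ ⟶ x) :
    Function.Injective (Y.map f) :=
  (leftInverse_map_const_zero Y f).injective

variable {Y} {z : ToType (Y.obj ⦋0⦌)}

lemma map_apply_eq_of_δ_eq (hz : Y.map (δ 0) z = Y.map (δ 1) z) {x : SimplexCategory}
    (f g : ⦋0⦌ ⟶ x) : Y.map f z = Y.map g z := by
  suffices H : ∀ i, Y.map (const ⦋0⦌ x i) z = Y.map (const ⦋0⦌ x 0) z by
    rw [eq_const_of_zero f, eq_const_of_zero g]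
    exact (H _).trans (H _).symm
  intro i
  -- the edge `0 ≤ i` of `x` joins the vertices `0` and `i`
  have h₀ : δ 0 ≫ mkOfLe (n := x.len) 0 i (Fin.zero_le i) = const ⦋0⦌ x i := Hom.ext_zero_left _ _
  have h₁ : δ 1 ≫ mkOfLe (n := x.len) 0 i (Fin.zero_le i) = const ⦋0⦌ x 0 := Hom.ext_zero_left _ _
  rw [← h₀, ← h₁, Y.map_comp, Y.map_comp, ConcreteCategory.comp_apply,
    ConcreteCategory.comp_apply, hz]

lemma map_δ_zero_eq_map_δ_one_of_ne {f g : ⦋0⦌ ⟶ ⦋1⦌} (hfg : f ≠ g)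
    (h : Y.map f z = Y.map g z) : Y.map (δ 0) z = Y.map (δ 1) z := by
  rcases hom_zero_one_eq_δ_zero_or_δ_one f with rfl | rfl <;>
    rcases hom_zero_one_eq_δ_zero_or_δ_one g with rfl | rfl
  exacts [(hfg rfl).elim, h, h.symm, (hfg rfl).elim]

end SimplexCategory

namespace NonemptyFinset

def singleton (t : ℕ) : NonemptyFinset := ⟨{t}, Finset.singleton_nonempty t⟩

lemma singleton_le {t : ℕ} {T : NonemptyFinset} (ht : t ∈ T.1) : singleton t ≤ T :=
  Finset.singleton_subset_iff.mpr ht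

lemma obj_singleton_eq {F : NonemptyFinset ⥤ SimplexCategory}
    (hobj : ∀ T, F.obj T = ⦋T.1.card - 1⦌) (t : ℕ) : F.obj (singleton t) = ⦋0⦌ :=
  hobj _

variable {C : Type*} [Category C] {FC : C → C → Type*} {CC : C → Type*}
  [∀ X Y, FunLike (FC X Y) (CC X) (CC Y)] [ConcreteCategory C FC]
  {F : NonemptyFinset ⥤ SimplexCategory} (h₀ : ∀ t, F.obj (singleton t) = ⦋0⦌)
  {Y : SimplexCategory ⥤ C} (u : ∀ T, (F ⋙ Y ⋙ forget C).obj T)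

def vertex {t : ℕ} {T : NonemptyFinset} (ht : t ∈ T.1) : ⦋0⦌ ⟶ F.obj T :=
  eqToHom (h₀ t).symm ≫ F.map (homOfLE (singleton_le ht))

def vertexValue (t : ℕ) : ToType (Y.obj ⦋0⦌) :=
  Y.map (eqToHom (h₀ t)) (u (singleton t))

variable {u}

lemma eq_map_vertex_vertexValue (hu : u ∈ (F ⋙ Y ⋙ forget C).sections) {t : ℕ}
    {T : NonemptyFinset} (ht : t ∈ T.1) :
    u T = Y.map (vertex h₀ ht) (vertexValue h₀ u t) := by
  rw [vertexValue, vertex, ← ConcreteCategory.comp_apply, ← Y.map_comp, ← Category.assoc,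
    eqToHom_trans, eqToHom_refl, Category.id_comp]
  exact (hu _).symm

lemma vertexValue_eq (hu : u ∈ (F ⋙ Y ⋙ forget C).sections) (s t : ℕ) :
    vertexValue h₀ u s = vertexValue h₀ u t := by
  let T : NonemptyFinset := ⟨{s, t}, Finset.insert_nonempty s {t}⟩
  have hs : s ∈ T.1 := Finset.mem_insert_self s {t}
  have ht : t ∈ T.1 := Finset.mem_insert_of_mem (Finset.mem_singleton_self t)
  have h := (eq_map_vertex_vertexValue h₀ hu hs).symm.trans (eq_map_vertex_vertexValue h₀ hu ht)
  rw [← leftInverse_map_const_zero Y (vertex h₀ hs) (vertexValue h₀ u s),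
    ← leftInverse_map_const_zero Y (vertex h₀ ht) (vertexValue h₀ u t), h]

lemma map_δ_zero_vertexValue_eq_of_ne (hu : u ∈ (F ⋙ Y ⋙ forget C).sections)
    {s t : ℕ} {T : NonemptyFinset} (hs : s ∈ T.1) (ht : t ∈ T.1) (e : F.obj T ⟶ ⦋1⦌)
    (hne : vertex h₀ hs ≫ e ≠ vertex h₀ ht ≫ e) (r : ℕ) :
    Y.map (δ 0) (vertexValue h₀ u r) = Y.map (δ 1) (vertexValue h₀ u r) := by
  refine map_δ_zero_eq_map_δ_one_of_ne hne ?_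
  rw [Y.map_comp, Y.map_comp, ConcreteCategory.comp_apply, ConcreteCategory.comp_apply,
    vertexValue_eq h₀ hu r s, ← eq_map_vertex_vertexValue h₀ hu hs, vertexValue_eq h₀ hu s t,
    ← eq_map_vertex_vertexValue h₀ hu ht]

lemma vertex_comp_eqToHom_ne (hobj : ∀ T, F.obj T = ⦋T.1.card - 1⦌)
    (hmap : ∀ (T T' : NonemptyFinset) (h : T ⟶ T') (j : Fin (T.1.card - 1 + 1)),
      T'.1.orderEmbOfFin (card_eq T')
          ((SimplexCategory.Hom.toOrderHom
            (eqToHom (hobj T).symm ≫ F.map h ≫ eqToHom (hobj T'))) j)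
        = T.1.orderEmbOfFin (card_eq T) j)
    {s t : ℕ} {T : NonemptyFinset} (hs : s ∈ T.1) (ht : t ∈ T.1) (hst : s ≠ t) :
    vertex (obj_singleton_eq hobj) hs ≫ eqToHom (hobj T) ≠
      vertex (obj_singleton_eq hobj) ht ≫ eqToHom (hobj T) := by
  have label : ∀ {r : ℕ} (hr : r ∈ T.1), T.1.orderEmbOfFin (card_eq T)
      ((vertex (obj_singleton_eq hobj) hr ≫ eqToHom (hobj T)).toOrderHom 0) = r := fun hr => by
    have h := hmap (singleton _) T (homOfLE (singleton_le hr)) 0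
    rwa [Finset.mem_singleton.mp (Finset.orderEmbOfFin_mem _ (card_eq (singleton _)) 0),
      ← Category.assoc] at h
  intro h
  exact hst ((label hs).symm.trans (h ▸ label ht))

end NonemptyFinset

open NonemptyFinset

/-- Let `Y` be a cosimplicial abelian group and
`f : P ⥤ Δ` the functor sending a nonempty finite subset `T ⊆ ℕ` with
`|T| = q+1` to `[q]` (characterized below by `hobj`, `hmap`).  The limit
`lim_Δ Y` is the equalizer of the two cofaces `d⁰, d¹ : Y⁰ → Y¹`, and
`lim_P (Y ∘ f)` is the set of sections of the `P`-shaped diagram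
`T ↦ Y^{|T|-1}`.  The canonical map `f*`, sending `z` in the equalizer to the
family `T ↦ Y(c_T)(z)` (where `c_T : [0] → f(T)` is the zeroth-vertex map),
is a bijection from the equalizer onto the set of sections. -/
theorem lim_comparison_s_zero
    (F : NonemptyFinset ⥤ SimplexCategory)
    (hobj : ∀ T, F.obj T = SimplexCategory.mk (T.1.card - 1))
    (hmap : ∀ (T T' : NonemptyFinset) (h : T ⟶ T') (j : Fin (T.1.card - 1 + 1)),
      T'.1.orderEmbOfFin (card_eq T')
          ((SimplexCategory.Hom.toOrderHom
            (eqToHom (hobj T).symm ≫ F.map h ≫ eqToHom (hobj T'))) j)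
        = T.1.orderEmbOfFin (card_eq T) j)
    (Y : SimplexCategory ⥤ AddCommGrpCat) :
    Set.BijOn
      (fun (z : Y.obj (SimplexCategory.mk 0)) =>
        (fun T => Y.map
          (SimplexCategory.const (SimplexCategory.mk 0) (SimplexCategory.mk (T.1.card - 1)) 0
            ≫ eqToHom (hobj T).symm) z : ∀ T, (F ⋙ Y ⋙ forget AddCommGrpCat).obj T))
      {z | Y.map (SimplexCategory.δ 0) z = Y.map (SimplexCategory.δ 1) z}
      (F ⋙ Y ⋙ forget AddCommGrpCat).sections := by
  refine ⟨fun z hz T T' h => ?_, fun z₁ _ z₂ _ h => ?_,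
    fun (u : ∀ T, (F ⋙ Y ⋙ forget AddCommGrpCat).obj T) hu => ?_⟩
  · change Y.map (F.map h) (Y.map _ z) = Y.map _ z
    rw [← ConcreteCategory.comp_apply, ← Y.map_comp]
    exact map_apply_eq_of_δ_eq hz _ _
  · exact map_injective_of_zero Y _ (congrFun h (singleton 0))
  · set w := vertexValue (obj_singleton_eq hobj) u 0
    let E : NonemptyFinset := ⟨{0, 1}, Finset.insert_nonempty 0 {1}⟩
    have h0 : 0 ∈ E.1 := Finset.mem_insert_self 0 {1}
    have h1 : 1 ∈ E.1 := Finset.mem_insert_of_mem (Finset.mem_singleton_self 1)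
    have hw : Y.map (δ 0) w = Y.map (δ 1) w :=
      map_δ_zero_vertexValue_eq_of_ne _ hu h0 h1 (eqToHom (hobj E))
        (vertex_comp_eqToHom_ne hobj hmap h0 h1 zero_ne_one) 0
    refine ⟨w, hw, funext fun T => ?_⟩
    obtain ⟨t, ht⟩ := T.2
    rw [eq_map_vertex_vertexValue (obj_singleton_eq hobj) hu ht, vertexValue_eq _ hu t 0]
    exact map_apply_eq_of_δ_eq hw _ _
end

section
/- Let $R \to B$ be a map of commutative rings that is a $G$-Galois extension for a finite group $G$ acting on $B$ by $R$-algebra maps, in the sense that the natural map $B \otimes_R B \to \prod_{g \in G} B$, $x \otimes y \mapsto (x \cdot g(y))_g$, is an isomorphism. Then for each $q \geq 0$ there is a natural isomorphism of $R$-algebras $B^{\otimes_R (q+1)} \cong \prod_{G^q} B$, and under these isomorphisms the Amitsur complex of $R \to B$ is isomorphic to the complex computing group cohomology: $\pi^s$ of the cosimplicial abelian group $[q] \mapsto B^{\otimes_R(q+1)}$ is isomorphic to $H^s(G; B)$ for all $s \geq 0$. -/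
open TensorProduct

section Cohom

/-- Cohomology of a (piece of a) cochain complex at the middle spot:
`ker(dnext) / im(dprev)`. -/
def cohomAt {M N P : Type*} [AddCommGroup M] [AddCommGroup N] [AddCommGroup P]
    (dprev : M →+ N) (dnext : N →+ P) : Type _ :=
  dnext.ker ⧸ dprev.range.addSubgroupOf dnext.ker

noncomputable instance {M N P : Type*} [AddCommGroup M] [AddCommGroup N] [AddCommGroup P]
    (dprev : M →+ N) (dnext : N →+ P) : AddCommGroup (cohomAt dprev dnext) := by
  unfold cohomAt; infer_instance

end Cohom

variable (R B : Type) [CommRing R] [CommRing B] [Algebra R B]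
variable (G : Type) [Group G] [Finite G] [MulSemiringAction G B]

/-- `BPow R B q = B^{⊗_R (q+1)}`, as an `R`-algebra. -/
noncomputable def BPow : ℕ → AlgCat R
  | 0 => AlgCat.of R B
  | q + 1 => AlgCat.of R (B ⊗[R] (BPow q))

/-- Coface insertion of `1 ∈ B` into the `i`-th tensor position. -/
noncomputable def faceB : ∀ q : ℕ, Fin (q + 2) → ((BPow R B q : Type) →ₗ[R] BPow R B (q + 1))
  | q, ⟨0, _⟩ => TensorProduct.mk R B (BPow R B q) 1
  | 0, ⟨_ + 1, _⟩ => (TensorProduct.mk R B B).flip 1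
  | q + 1, ⟨i + 1, _⟩ => LinearMap.lTensor B (faceB q ⟨i, by omega⟩)

/-- The Amitsur coboundary `δ = ∑ (-1)^i d^i : B^{⊗(q+1)} → B^{⊗(q+2)}`. -/
noncomputable def amitsurD (q : ℕ) : (BPow R B q : Type) →+ BPow R B (q + 1) :=
  (∑ i : Fin (q + 2), ((-1 : ℤ) ^ (i : ℕ)) • faceB R B q i).toAddMonoidHom

/-- The map `B ⊗_R B → ∏_{g ∈ G} B`, `x ⊗ y ↦ (x · g(y))_g`; the extension
`R → B` is `G`-Galois precisely when this is bijective. -/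
noncomputable def galMap (hfix : ∀ (g : G) (r : R), g • algebraMap R B r = algebraMap R B r) :
    B ⊗[R] B →ₗ[R] (G → B) :=
  TensorProduct.lift
    { toFun := fun x =>
        { toFun := fun y g => x * g • y
          map_add' := fun y₁ y₂ => by funext g; simp [smul_add, mul_add]
          map_smul' := fun r y => by
            funext g
            simp only [RingHom.id_apply, Pi.smul_apply, Algebra.smul_def, mul_smul_comm]
            rw [smul_mul', hfix g r]
            ring }
      map_add' := fun x₁ x₂ => by ext y g; simp [add_mul]
      map_smul' := fun r x => by ext y g; simp [Algebra.smul_def]; ring }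

/-- The standard (inhomogeneous) group cochain complex `C^q(G; B) = Map(G^q, B)`,
which computes the same cohomology as the homogeneous complex `Map(G^{q+1}, B)^G`. -/
abbrev groupCochain (q : ℕ) : Type := (Fin q → G) → B

/-- The group cohomology coboundary on inhomogeneous cochains. -/
noncomputable def groupD (q : ℕ) : groupCochain B G q →+ groupCochain B G (q + 1) where
  toFun f g :=
    g 0 • f (fun i => g i.succ)
      + (∑ i : Fin q, ((-1 : ℤ) ^ ((i : ℕ) + 1)) •
          f (fun j => if (j : ℕ) < (i : ℕ) then g j.castSucc
            else if (j : ℕ) = (i : ℕ) then g j.castSucc * g j.succ else g j.succ))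
      + ((-1 : ℤ) ^ (q + 1)) • f (fun j => g j.castSucc)
  map_zero' := by
    funext g
    simp
  map_add' f₁ f₂ := by
    funext g
    simp only [Pi.add_apply, smul_add, Finset.sum_add_distrib]
    abel


/-!
The algebra map `χ_q : B^{⊗(q+1)} → Map(G^q, B)`,
`b₀ ⊗ ⋯ ⊗ b_q ↦ (g ↦ b₀ · g₁(b₁) · (g₁g₂)(b₂) ⋯ (g₁⋯g_q)(b_q))`, satisfies
`χ_{q+1}(b ⊗ t)(g) = b · g₁(χ_q(t)(g₂, …, g_{q+1}))`. Hence `χ_{q+1}` is `id_B ⊗ χ_q` followed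
by the Galois isomorphism `B ⊗_R B ≅ Map(G, B)` in each coordinate of `Map(G^q, B)`, and it is
bijective by induction on `q`. Under `χ`, the coface inserting `1` in position `0` becomes
`f ↦ g₁ • f(g₂, …)`, the one in position `q + 1` drops the last argument, and the one in
position `i + 1` multiplies `gᵢ₊₁ gᵢ₊₂`: these are the terms of the inhomogeneous group
coboundary. So `χ` is an isomorphism of cochain complexes, and it induces isomorphisms of
kernels and of `ker / im`.
-/

section Transport

variable {A A' A'' C C' C'' : Type*} [AddCommGroup A] [AddCommGroup A'] [AddCommGroup A'']
  [AddCommGroup C] [AddCommGroup C'] [AddCommGroup C'']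

namespace AddMonoidHom

theorem map_ker_eq_of_comm {d : A →+ A'} {d' : C →+ C'} {e : A ≃+ C} {e' : A' ≃+ C'}
    (h : ∀ x, e' (d x) = d' (e x)) : d.ker.map (e : A →+ C) = d'.ker := by
  have hker : d.ker = (d'.comp e).ker := by
    ext x
    rw [mem_ker, mem_ker, coe_comp, Function.comp_apply, AddMonoidHom.coe_coe, ← h,
      AddEquiv.map_eq_zero_iff]
  rw [hker, ← comap_ker, AddSubgroup.map_comap_eq_self_of_surjective e.surjective]

theorem map_range_eq_of_comm {d : A →+ A'} {d' : C →+ C'} {e : A ≃+ C} {e' : A' ≃+ C'}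
    (h : ∀ x, e' (d x) = d' (e x)) : d.range.map (e' : A' →+ C') = d'.range := by
  have hcomp : (e' : A' →+ C').comp d = d'.comp e := ext h
  rw [← range_comp, hcomp, range_comp, range_eq_top.mpr e.surjective, ← range_eq_map]

noncomputable def kerCongr {d : A →+ A'} {d' : C →+ C'} {e : A ≃+ C} {e' : A' ≃+ C'}
    (h : ∀ x, e' (d x) = d' (e x)) : d.ker ≃+ d'.ker :=
  (e.addSubgroupMap d.ker).trans (AddEquiv.addSubgroupCongr (map_ker_eq_of_comm h))

theorem coe_kerCongr_symm_apply {d : A →+ A'} {d' : C →+ C'} {e : A ≃+ C} {e' : A' ≃+ C'}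
    (h : ∀ x, e' (d x) = d' (e x)) (y : d'.ker) : ((kerCongr h).symm y : A) = e.symm y :=
  rfl

end AddMonoidHom

noncomputable def cohomAt.congr {dp : A'' →+ A} {d : A →+ A'} {dp' : C'' →+ C} {d' : C →+ C'}
    {e'' : A'' ≃+ C''} {e : A ≃+ C} {e' : A' ≃+ C'}
    (hp : ∀ x, e (dp x) = dp' (e'' x)) (h : ∀ x, e' (d x) = d' (e x)) :
    cohomAt dp d ≃+ cohomAt dp' d' :=
  QuotientAddGroup.congr _ _ (AddMonoidHom.kerCongr h) (by
    ext y
    rw [AddSubgroup.map_equiv_eq_comap_symm, AddSubgroup.mem_comap, AddSubgroup.mem_addSubgroupOf,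
      AddSubgroup.mem_addSubgroupOf, AddMonoidHom.coe_coe,
      AddMonoidHom.coe_kerCongr_symm_apply, ← AddMonoidHom.map_range_eq_of_comm hp,
      AddSubgroup.map_equiv_eq_comap_symm, AddSubgroup.mem_comap]
    rfl)

end Transport

namespace BPow

variable {R B G : Type} [CommRing R] [CommRing B] [Algebra R B] [Group G]
  [MulSemiringAction G B] (hfix : ∀ (g : G) (r : R), g • algebraMap R B r = algebraMap R B r)

noncomputable def twistCochain (q : ℕ) : groupCochain B G q →ₐ[R] groupCochain B G (q + 1) where
  toFun f g := g 0 • f (fun i => g i.succ)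
  map_one' := funext fun _ => smul_one _
  map_mul' _ _ := funext fun _ => smul_mul' _ _ _
  map_zero' := funext fun _ => smul_zero _
  map_add' _ _ := funext fun _ => smul_add _ _ _
  commutes' r := funext fun g => hfix (g 0) r

noncomputable def toCochain : ∀ q : ℕ, (BPow R B q : Type) →ₐ[R] groupCochain B G q
  | 0 => Pi.constAlgHom R (Fin 0 → G) B
  | q + 1 => Algebra.TensorProduct.productMap (Pi.constAlgHom R (Fin (q + 1) → G) B)
      ((twistCochain hfix q).comp (toCochain q))

theorem toCochain_succ_tmul (q : ℕ) (b : B) (t : BPow R B q) :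
    toCochain hfix (q + 1) (b ⊗ₜ[R] t : B ⊗[R] BPow R B q)
      = fun g => b * g 0 • toCochain hfix q t (fun i => g i.succ) :=
  rfl

variable (R) in
def consUncurryEquiv (q : ℕ) : ((Fin q → G) → G → B) ≃ₗ[R] ((Fin (q + 1) → G) → B) where
  toFun F g := F (fun i => g i.succ) (g 0)
  map_add' _ _ := rfl
  map_smul' _ _ := rfl
  invFun f h g₀ := f (Fin.cons g₀ h)
  left_inv F := by simp
  right_inv f := funext fun g => congrArg f (Fin.cons_self_tail g)

theorem bijective_toCochain [Finite G] (hGal : Function.Bijective (galMap R B G hfix)) (q : ℕ) :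
    Function.Bijective (toCochain hfix q) := by
  induction q with
  | zero => exact (Equiv.funUnique (Fin 0 → G) B).symm.bijective
  | succ q ih =>
    classical
    have : Fintype G := Fintype.ofFinite G
    let e := (LinearEquiv.ofBijective (toCochain hfix q).toLinearMap ih).lTensor B ≪≫ₗ
      TensorProduct.piRight R R B _ ≪≫ₗ
      LinearEquiv.piCongrRight (fun _ => LinearEquiv.ofBijective _ hGal) ≪≫ₗ consUncurryEquiv R q
    have h : (toCochain hfix (q + 1)).toLinearMap = e.toLinearMap :=
      TensorProduct.ext' fun _ _ => rfl
    rw [← AlgHom.coe_toLinearMap, h]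
    exact e.bijective

theorem toCochain_faceB_zero (q : ℕ) (x : BPow R B q) :
    toCochain hfix (q + 1) (faceB R B q 0 x) = twistCochain hfix q (toCochain hfix q x) := by
  rw [← Fin.mk_zero, faceB]
  exact (toCochain_succ_tmul hfix q 1 x).trans (funext fun _ => one_mul _)

theorem toCochain_faceB_last (q : ℕ) (x : BPow R B q) :
    toCochain hfix (q + 1) (faceB R B q (Fin.last (q + 1)) x)
      = fun g => toCochain hfix q x (fun j => g j.castSucc) := by
  induction q with
  | zero =>
    change toCochain hfix 1 (x ⊗ₜ[R] (1 : B) : B ⊗[R] B) = _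
    refine (toCochain_succ_tmul hfix 0 x 1).trans (funext fun g => ?_)
    rw [map_one, Pi.one_apply, smul_one]
    exact mul_one (M := B) x
  | succ q ih =>
    refine LinearMap.congr_fun
      (f := (toCochain hfix (q + 2)).toLinearMap ∘ₗ (faceB R B q (Fin.last (q + 1))).lTensor B)
      (g := LinearMap.funLeft R B (fun g j => g j.castSucc) ∘ₗ (toCochain hfix (q + 1)).toLinearMap)
      (TensorProduct.ext' fun b t => ?_) x
    change toCochain hfix (q + 2) (b ⊗ₜ[R] faceB R B q (Fin.last (q + 1)) t) = _
    rw [toCochain_succ_tmul, ih]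
    rfl

theorem toCochain_faceB_castSucc_succ (q : ℕ) (i : Fin q) (x : BPow R B q) :
    toCochain hfix (q + 1) (faceB R B q i.castSucc.succ x)
      = fun g => toCochain hfix q x (fun j => if (j : ℕ) < (i : ℕ) then g j.castSucc
          else if (j : ℕ) = (i : ℕ) then g j.castSucc * g j.succ else g j.succ) := by
  induction q with
  | zero => exact i.elim0
  | succ q ih =>
    refine LinearMap.congr_fun
      (f := (toCochain hfix (q + 2)).toLinearMap ∘ₗ (faceB R B q i.castSucc).lTensor B)
      (g := LinearMap.funLeft R B (fun (g : Fin (q + 2) → G) (j : Fin (q + 1)) =>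
          if (j : ℕ) < (i : ℕ) then g j.castSucc
          else if (j : ℕ) = (i : ℕ) then g j.castSucc * g j.succ else g j.succ) ∘ₗ
        (toCochain hfix (q + 1)).toLinearMap)
      (TensorProduct.ext' fun b t => ?_) x
    change toCochain hfix (q + 2) (b ⊗ₜ[R] faceB R B q i.castSucc t) =
      fun g => toCochain hfix (q + 1) (b ⊗ₜ[R] t : B ⊗[R] BPow R B q) _
    rw [toCochain_succ_tmul, toCochain_succ_tmul]
    cases i using Fin.cases with
    | zero =>
      rw [Fin.castSucc_zero, toCochain_faceB_zero]
      funext g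
      simp [twistCochain, mul_smul]
    | succ i =>
      rw [← Fin.succ_castSucc, ih]
      funext g
      simp

theorem toCochain_amitsurD (q : ℕ) (x : BPow R B q) :
    toCochain hfix (q + 1) (amitsurD R B q x) = groupD B G q (toCochain hfix q x) := by
  have hsum : toCochain hfix (q + 1) (amitsurD R B q x) =
      ∑ i : Fin (q + 2), (-1 : ℤ) ^ (i : ℕ) • toCochain hfix (q + 1) (faceB R B q i x) := by
    rw [amitsurD, LinearMap.toAddMonoidHom_coe, LinearMap.sum_apply, map_sum]
    simp only [LinearMap.smul_apply, map_zsmul]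
  rw [hsum, Fin.sum_univ_succ, Fin.sum_univ_castSucc, Fin.succ_last, toCochain_faceB_zero,
    toCochain_faceB_last]
  simp_rw [toCochain_faceB_castSucc_succ]
  funext g
  simp [groupD, twistCochain, add_assoc]

end BPow

/-- Let `R → B` be a `G`-Galois extension of commutative
rings for a finite group `G` acting on `B` by `R`-algebra automorphisms, i.e.
the map `B ⊗_R B → ∏_{g ∈ G} B`, `x ⊗ y ↦ (x · g(y))_g`, is bijective.  Then:
(a) for each `q ≥ 0` there is an isomorphism of `R`-algebras
`B^{⊗_R (q+1)} ≅ ∏_{G^q} B`; and (b) under these isomorphisms the Amitsur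
complex of `R → B` computes group cohomology: `π^s` of the cosimplicial
abelian group `[q] ↦ B^{⊗_R (q+1)}` is isomorphic to `H^s(G; B)` for all
`s ≥ 0` (for `s = 0`, both are kernels of the zeroth coboundaries; for
`s ≥ 1`, both are `ker/im` at spot `s`). -/
theorem amitsur_cohomology_iso_group_cohomology
    (hfix : ∀ (g : G) (r : R), g • algebraMap R B r = algebraMap R B r)
    (hGal : Function.Bijective (galMap R B G hfix)) :
    (∀ q : ℕ, Nonempty ((BPow R B q : Type) ≃ₐ[R] ((Fin q → G) → B))) ∧
    Nonempty ((amitsurD R B 0).ker ≃+ (groupD B G 0).ker) ∧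
    (∀ s : ℕ, Nonempty
      (cohomAt (amitsurD R B s) (amitsurD R B (s + 1)) ≃+
        cohomAt (groupD B G s) (groupD B G (s + 1)))) := by
  let χ (q : ℕ) : (BPow R B q : Type) ≃ₐ[R] groupCochain B G q :=
    AlgEquiv.ofBijective (BPow.toCochain hfix q) (BPow.bijective_toCochain hfix hGal q)
  have hχ (q : ℕ) (x : BPow R B q) :
      (χ (q + 1) : _ ≃+ _) (amitsurD R B q x) = groupD B G q ((χ q : _ ≃+ _) x) :=
    BPow.toCochain_amitsurD hfix q x
  exact ⟨fun q => ⟨χ q⟩, ⟨AddMonoidHom.kerCongr (hχ 0)⟩,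
    fun s => ⟨cohomAt.congr (hχ s) (hχ (s + 1))⟩⟩
end
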